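/- Let B be the Grassmann envelope of UT_3(K)_{(0,1,0)} with the involution * as above. Then the following hold in B: (1) the product of any three degree-1 elements is zero; (2) for all degree-1 elements u, w and every skew degree-0 element v ∈ B_0^-, u v w = 0; (3) for all skew degree-0 elements v_1, v_2, v_3 ∈ B_0^-, v_1 v_2 v_3 = v_3 v_2 v_1; (4) for all v_1, v_2, v_3, v_4 ∈ B_0^-, [v_1, v_2][v_3, v_4] = 0. -/
import Mathlib


noncomputable section

/-- The infinite-dimensional Grassmann (exterior) algebra over `K` on a countably
infinite-dimensional vector space. -/
abbrev GrassmannE (K : Type) [Field K] := ExteriorAlgebra K (ℕ →₀ K)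

/-- The even part `E₀` of the Grassmann algebra. -/
def E0 (K : Type) [Field K] : Submodule K (GrassmannE K) :=
  CliffordAlgebra.evenOdd (0 : QuadraticForm K (ℕ →₀ K)) 0

/-- The odd part `E₁` of the Grassmann algebra. -/
def E1 (K : Type) [Field K] : Submodule K (GrassmannE K) :=
  CliffordAlgebra.evenOdd (0 : QuadraticForm K (ℕ →₀ K)) 1

open Matrix

/-- The Grassmann envelope `B = G(UT₃)` of `UT₃(K)` with the grading induced by `(0,1,0)`:
matrices `!![a,f,d; 0,b,g; 0,0,c]` with `a,b,c,d ∈ E₀` and `f,g ∈ E₁`. -/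
def GUT3 (K : Type) [Field K] : Set (Matrix (Fin 3) (Fin 3) (GrassmannE K)) :=
  {x | x 1 0 = 0 ∧ x 2 0 = 0 ∧ x 2 1 = 0 ∧
    x 0 0 ∈ E0 K ∧ x 1 1 ∈ E0 K ∧ x 2 2 ∈ E0 K ∧ x 0 2 ∈ E0 K ∧
    x 0 1 ∈ E1 K ∧ x 1 2 ∈ E1 K}

/-- The involution `*` on `B` sending `!![a,f,d; 0,b,g; 0,0,c]` to
`!![c,g,-d; 0,b,f; 0,0,a]`. -/
def bstar (K : Type) [Field K] (x : Matrix (Fin 3) (Fin 3) (GrassmannE K)) :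
    Matrix (Fin 3) (Fin 3) (GrassmannE K) :=
  !![x 2 2, x 1 2, -(x 0 2); 0, x 1 1, x 0 1; 0, 0, x 0 0]

/-- Degree-0 elements of `B`: those with zero entries in positions (0,1) and (1,2). -/
def IsDeg0 {K : Type} [Field K] (x : Matrix (Fin 3) (Fin 3) (GrassmannE K)) : Prop :=
  x 0 1 = 0 ∧ x 1 2 = 0

/-- Degree-1 elements of `B`: matrices `f·e₁₂ + g·e₂₃`. -/
def IsDeg1 {K : Type} [Field K] (x : Matrix (Fin 3) (Fin 3) (GrassmannE K)) : Prop :=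
  x 0 0 = 0 ∧ x 1 1 = 0 ∧ x 2 2 = 0 ∧ x 0 2 = 0 ∧ x 1 0 = 0 ∧ x 2 0 = 0 ∧ x 2 1 = 0

/-- Degree-1 part of `B`: `{f·e₁₂ + g·e₂₃ : f, g ∈ E₁}`. -/
def Bdeg1 (K : Type) [Field K] : Set (Matrix (Fin 3) (Fin 3) (GrassmannE K)) :=
  {x | ∃ f ∈ E1 K, ∃ g ∈ E1 K, x = !![0, f, 0; 0, 0, g; 0, 0, 0]}

/-- Symmetric degree-0 part `B₀⁺ = {a(e₁₁+e₃₃) + b·e₂₂ : a,b ∈ E₀}`. -/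
def B0plus (K : Type) [Field K] : Set (Matrix (Fin 3) (Fin 3) (GrassmannE K)) :=
  {x | ∃ a ∈ E0 K, ∃ b ∈ E0 K, x = !![a, 0, 0; 0, b, 0; 0, 0, a]}

/-- Skew degree-0 part `B₀⁻ = {d(e₁₁-e₃₃) + c·e₁₃ : c,d ∈ E₀}`. -/
def B0minus (K : Type) [Field K] : Set (Matrix (Fin 3) (Fin 3) (GrassmannE K)) :=
  {x | ∃ d ∈ E0 K, ∃ c ∈ E0 K, x = !![d, 0, c; 0, 0, 0; 0, 0, -d]}

/-- Symmetric degree-1 part `B₁⁺ = {g(e₁₂+e₂₃) : g ∈ E₁}`. -/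
def B1plus (K : Type) [Field K] : Set (Matrix (Fin 3) (Fin 3) (GrassmannE K)) :=
  {x | ∃ g ∈ E1 K, x = !![0, g, 0; 0, 0, g; 0, 0, 0]}

/-- Skew degree-1 part `B₁⁻ = {f(e₁₂-e₂₃) : f ∈ E₁}`. -/
def B1minus (K : Type) [Field K] : Set (Matrix (Fin 3) (Fin 3) (GrassmannE K)) :=
  {x | ∃ f ∈ E1 K, x = !![0, f, 0; 0, 0, -f; 0, 0, 0]}

section Aux
variable (K : Type) [Field K]

open CliffordAlgebra in
lemma ii_anticomm (a b : ℕ →₀ K) :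
    ι (0 : QuadraticForm K (ℕ →₀ K)) a * ι (0 : QuadraticForm K (ℕ →₀ K)) b
      = -(ι (0 : QuadraticForm K (ℕ →₀ K)) b * ι (0 : QuadraticForm K (ℕ →₀ K)) a) := by
  have := ι_mul_ι_add_swap (Q := (0 : QuadraticForm K (ℕ →₀ K))) a b
  simp only [QuadraticMap.polar, QuadraticMap.zero_apply] at this
  rw [eq_neg_iff_add_eq_zero]
  simpa using this

open CliffordAlgebra in
lemma ii_central (m n : ℕ →₀ K) (x : GrassmannE K) :
    Commute (ι (0 : QuadraticForm K (ℕ →₀ K)) m * ι (0 : QuadraticForm K (ℕ →₀ K)) n) x := by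
  induction x using CliffordAlgebra.induction with
  | algebraMap r => exact (Algebra.commutes r _).symm
  | ι v =>
    show _ = _
    rw [mul_assoc, ii_anticomm K n v, mul_neg, ← mul_assoc, ii_anticomm K m v, neg_mul,
      neg_neg, mul_assoc]
  | mul a b ha hb => exact ha.mul_right hb
  | add a b ha hb => exact ha.add_right hb

lemma e0_central {a : GrassmannE K} (ha : a ∈ E0 K) (x : GrassmannE K) :
    Commute a x := by
  have ha' : a ∈ CliffordAlgebra.evenOdd (0 : QuadraticForm K (ℕ →₀ K)) 0 := ha
  clear ha
  induction a, ha' using CliffordAlgebra.even_induction with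
  | algebraMap r => exact Algebra.commute_algebraMap_left r x
  | add y z hy hz ihy ihz => exact ihy.add_left ihz
  | ι_mul_ι_mul m₁ m₂ y hy ih => exact (ii_central K m₁ m₂ x).mul_left ih

lemma mk3_eq {α : Type _} {a00 a01 a02 a10 a11 a12 a20 a21 a22
    b00 b01 b02 b10 b11 b12 b20 b21 b22 : α}
    (h00 : a00 = b00) (h01 : a01 = b01) (h02 : a02 = b02)
    (h10 : a10 = b10) (h11 : a11 = b11) (h12 : a12 = b12)
    (h20 : a20 = b20) (h21 : a21 = b21) (h22 : a22 = b22) :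
    !![a00, a01, a02; a10, a11, a12; a20, a21, a22]
      = !![b00, b01, b02; b10, b11, b12; b20, b21, b22] := by
  subst h00 h01 h02 h10 h11 h12 h20 h21 h22; rfl

lemma sub3 {α : Type _} [Sub α] {a00 a01 a02 a10 a11 a12 a20 a21 a22
    b00 b01 b02 b10 b11 b12 b20 b21 b22 : α} :
    !![a00, a01, a02; a10, a11, a12; a20, a21, a22]
      - !![b00, b01, b02; b10, b11, b12; b20, b21, b22]
      = !![a00 - b00, a01 - b01, a02 - b02; a10 - b10, a11 - b11, a12 - b12;
          a20 - b20, a21 - b21, a22 - b22] := by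
  ext i j
  fin_cases i <;> fin_cases j <;> rfl

lemma zero3 {α : Type _} [Zero α] :
    (0 : Matrix (Fin 3) (Fin 3) α) = !![0, 0, 0; 0, 0, 0; 0, 0, 0] := by
  ext i j
  fin_cases i <;> fin_cases j <;> rfl

lemma comm3 {a c : GrassmannE K} (b : GrassmannE K) (ha : a ∈ E0 K) (hc : c ∈ E0 K) :
    a * b * c = c * b * a := by
  calc a * b * c = c * (a * b) := (e0_central K hc (a * b)).symm
    _ = c * (b * a) := by rw [e0_central K ha b]
    _ = c * b * a := (mul_assoc _ _ _).symm

end Aux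

/-- in `B = (G(UT₃), *)`: (1) the product of any three degree-1 elements is zero;
(2) for degree-1 elements `u, w` and a skew degree-0 element `v`, `u v w = 0`;
(3) for skew degree-0 elements `v₁ v₂ v₃ = v₃ v₂ v₁`; (4) `[v₁,v₂][v₃,v₄] = 0` for skew
degree-0 elements. -/
theorem gut3_identities (K : Type) [Field K] [CharZero K] :
    (∀ u ∈ Bdeg1 K, ∀ v ∈ Bdeg1 K, ∀ w ∈ Bdeg1 K, u * v * w = 0) ∧
    (∀ u ∈ Bdeg1 K, ∀ w ∈ Bdeg1 K, ∀ v ∈ B0minus K, u * v * w = 0) ∧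
    (∀ v₁ ∈ B0minus K, ∀ v₂ ∈ B0minus K, ∀ v₃ ∈ B0minus K, v₁ * v₂ * v₃ = v₃ * v₂ * v₁) ∧
    (∀ v₁ ∈ B0minus K, ∀ v₂ ∈ B0minus K, ∀ v₃ ∈ B0minus K, ∀ v₄ ∈ B0minus K,
      (v₁ * v₂ - v₂ * v₁) * (v₃ * v₄ - v₄ * v₃) = 0) := by
  refine ⟨?_, ?_, ?_, ?_⟩
  · rintro u ⟨f1, hf1, g1, hg1, rfl⟩ v ⟨f2, hf2, g2, hg2, rfl⟩ w ⟨f3, hf3, g3, hg3, rfl⟩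
    rw [zero3]
    simp only [Matrix.mul_fin_three]
    apply mk3_eq <;> simp
  · rintro u ⟨f1, hf1, g1, hg1, rfl⟩ w ⟨f2, hf2, g2, hg2, rfl⟩ v ⟨d, hd, c, hc, rfl⟩
    rw [zero3]
    simp only [Matrix.mul_fin_three]
    apply mk3_eq <;> simp
  · rintro v₁ ⟨d1, hd1, c1, hc1, rfl⟩ v₂ ⟨d2, hd2, c2, hc2, rfl⟩ v₃ ⟨d3, hd3, c3, hc3, rfl⟩
    simp only [Matrix.mul_fin_three]
    apply mk3_eq <;> simp
    · exact comm3 K d2 hd1 hd3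
    · simp only [add_mul, neg_mul]
      rw [comm3 K d2 hd1 hc3, comm3 K c2 hd1 hd3, comm3 K d2 hc1 hd3]
      abel
    · exact comm3 K d2 hd1 hd3
  · rintro v₁ ⟨d1, hd1, c1, hc1, rfl⟩ v₂ ⟨d2, hd2, c2, hc2, rfl⟩ v₃ ⟨d3, hd3, c3, hc3, rfl⟩
      v₄ ⟨d4, hd4, c4, hc4, rfl⟩
    rw [zero3]
    simp only [Matrix.mul_fin_three, sub3]
    have e12 : d1 * d2 = d2 * d1 := e0_central K hd1 d2
    have e34 : d3 * d4 = d4 * d3 := e0_central K hd3 d4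
    apply mk3_eq <;> simp [e12, e34]
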